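/- arXiv:2205.00729 — 3 statements merged into one kernel-verified Lean document; each statement's English description precedes it below -/
import Mathlib

section
/- Let $H\in(0,1/2)$, $\tilde\theta>0$, $\rho>1+\frac{1}{H\tilde\theta}$, $\alpha_{-1},\alpha_0,\alpha_1,\alpha_2,\tilde\sigma>0$, and define $\tilde f(s,y)= -\alpha_{-1}\tilde\theta y^{2\tilde\theta+1}+\alpha_0 y^{\tilde\theta+1}-\frac{\alpha_1}{\tilde\theta}y+\frac{\alpha_2}{\tilde\theta^\rho}s^{2H-1}y^{-\tilde\theta\rho+\tilde\theta+1}-\tilde\sigma H s^{2H-1}(\tilde\theta+1)y^{-1}$ for $s\in(0,1]$, $y>0$. Then there exist constants $h_1>0$ and $y_1>0$ such that $\tilde f(s,y)\ge h_1 s^{2H-1} y^{-\alpha}$ for all $s\in(0,1]$ and $y\in(0,y_1)$, where $\alpha:=\tilde\theta\rho-\tilde\theta-1$; moreover $\alpha>\frac{1}{H}-1$. -/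
open Set

set_option maxHeartbeats 1000000 in
/-- Condition (A2) for the transformed fractional Ait-Sahalia drift: repulsion from zero,
`f̃(s,y) ≥ h₁ s^(2H-1) y^(-α)` for small `y`, with `α = θ̃ρ - θ̃ - 1 > 1/H - 1`. -/
theorem stmt_3
    (H θt ρ am1 α₀ α₁ α₂ σt : ℝ)
    (hH : H ∈ Ioo (0 : ℝ) (1 / 2)) (hθ : 0 < θt) (hρ : ρ > 1 + 1 / (H * θt))
    (ham1 : 0 < am1) (hα₀ : 0 < α₀) (hα₁ : 0 < α₁) (hα₂ : 0 < α₂) (hσ : 0 < σt)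
    (ftilde : ℝ → ℝ → ℝ)
    (hf : ∀ s ∈ Ioc (0 : ℝ) 1, ∀ y : ℝ, 0 < y →
      ftilde s y = -(am1 * θt) * y ^ (2 * θt + 1) + α₀ * y ^ (θt + 1) - (α₁ / θt) * y
        + (α₂ / θt ^ ρ) * s ^ (2 * H - 1) * y ^ (-(θt * ρ) + θt + 1)
        - σt * H * s ^ (2 * H - 1) * (θt + 1) * y⁻¹) :
    (∃ h1 > (0 : ℝ), ∃ y1 > (0 : ℝ), ∀ s ∈ Ioc (0 : ℝ) 1, ∀ y ∈ Ioo (0 : ℝ) y1,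
        h1 * s ^ (2 * H - 1) * y ^ (-(θt * ρ - θt - 1)) ≤ ftilde s y)
      ∧ θt * ρ - θt - 1 > 1 / H - 1 := by
  obtain ⟨hH0, hH2⟩ := hH
  have hθρpos : (0:ℝ) < θt ^ ρ := Real.rpow_pos_of_pos hθ ρ
  set α : ℝ := θt * ρ - θt - 1 with hα_def
  set c : ℝ := α₂ / θt ^ ρ with hc_def
  have hc : 0 < c := div_pos hα₂ hθρpos
  have hαH : α > 1 / H - 1 := by
    rw [hα_def]
    have h2 : θt * (1 / (H * θt)) = 1 / H := by
      field_simp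
    nlinarith [mul_lt_mul_of_pos_left hρ hθ]
  have hH1 : (2:ℝ) < 1 / H := by
    rw [lt_div_iff₀ hH0]; linarith
  have hα1 : 1 < α := by linarith
  set K1 : ℝ := σt * H * (θt + 1) with hK1_def
  have hK1 : 0 < K1 := by positivity
  set K2 : ℝ := am1 * θt + α₁ / θt with hK2_def
  have hK2 : 0 < K2 := by positivity
  set A1 : ℝ := (c / (4 * K1)) ^ (1 / (α - 1)) with hA1_def
  set A2 : ℝ := (c / (4 * K2)) ^ (1 / (α + 1)) with hA2_def
  have hA1pos : 0 < A1 := Real.rpow_pos_of_pos (by positivity) _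
  have hA2pos : 0 < A2 := Real.rpow_pos_of_pos (by positivity) _
  clear_value α c K1 K2 A1 A2
  refine ⟨⟨c / 2, by positivity, min 1 (min A1 A2), by positivity, ?_⟩, hαH⟩
  intro s hs y hy
  obtain ⟨hy0, hyu⟩ := hy
  have hylt1 : y < 1 := lt_of_lt_of_le hyu (min_le_left _ _)
  have hyA1 : y < A1 := lt_of_lt_of_le hyu ((min_le_right _ _).trans (min_le_left _ _))
  have hyA2 : y < A2 := lt_of_lt_of_le hyu ((min_le_right _ _).trans (min_le_right _ _))
  rw [hf s hs y hy0]
  have hsp : 0 < s ^ (2 * H - 1) := Real.rpow_pos_of_pos hs.1 _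
  have hs1 : 1 ≤ s ^ (2 * H - 1) := by
    have := Real.rpow_le_rpow_of_exponent_ge hs.1 hs.2 (show 2 * H - 1 ≤ 0 by linarith)
    rwa [Real.rpow_zero] at this
  have hYpos : 0 < y ^ (-α) := Real.rpow_pos_of_pos hy0 _
  have hexp : -(θt * ρ) + θt + 1 = -α := by rw [hα_def]; ring
  rw [hexp]
  -- Inequality I : the σ-term
  have hA1eq : A1 ^ (α - 1) = c / (4 * K1) := by
    rw [hA1_def, ← Real.rpow_mul (by positivity),
      one_div_mul_cancel (by linarith : α - 1 ≠ 0), Real.rpow_one]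
  have hy1pow : y ^ (α - 1) ≤ c / (4 * K1) := by
    calc y ^ (α - 1) ≤ A1 ^ (α - 1) :=
          Real.rpow_le_rpow hy0.le hyA1.le (by linarith)
      _ = c / (4 * K1) := hA1eq
  have hmul1 : y ^ (α - 1) * y ^ (-α) = y⁻¹ := by
    rw [← Real.rpow_add hy0, show α - 1 + -α = -1 by ring, Real.rpow_neg_one]
  have hK1y : K1 * y ^ (α - 1) ≤ c / 4 := by
    have := (le_div_iff₀ (by positivity : (0:ℝ) < 4 * K1)).mp hy1pow
    linarith
  have hI0 : K1 * y⁻¹ ≤ c / 4 * y ^ (-α) := by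
    have h := mul_le_mul_of_nonneg_right hK1y hYpos.le
    rw [mul_assoc, hmul1] at h
    exact h
  have hI : s ^ (2 * H - 1) * (K1 * y⁻¹) ≤ s ^ (2 * H - 1) * (c / 4 * y ^ (-α)) :=
    mul_le_mul_of_nonneg_left hI0 hsp.le
  rw [hK1_def] at hI
  -- Inequality II : the polynomial terms
  have hA2eq : A2 ^ (α + 1) = c / (4 * K2) := by
    rw [hA2_def, ← Real.rpow_mul (by positivity),
      one_div_mul_cancel (by linarith : α + 1 ≠ 0), Real.rpow_one]
  have hy2pow : y ^ (α + 1) ≤ c / (4 * K2) := by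
    calc y ^ (α + 1) ≤ A2 ^ (α + 1) :=
          Real.rpow_le_rpow hy0.le hyA2.le (by linarith)
      _ = c / (4 * K2) := hA2eq
  have hmul2 : y ^ (α + 1) * y ^ (-α) = y := by
    rw [← Real.rpow_add hy0, show α + 1 + -α = 1 by ring, Real.rpow_one]
  have hK2y : K2 * y ^ (α + 1) ≤ c / 4 := by
    have := (le_div_iff₀ (by positivity : (0:ℝ) < 4 * K2)).mp hy2pow
    linarith
  have hII0 : K2 * y ≤ c / 4 * y ^ (-α) := by
    have h := mul_le_mul_of_nonneg_right hK2y hYpos.le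
    rw [mul_assoc, hmul2] at h
    exact h
  rw [hK2_def] at hII0
  have hypow : y ^ (2 * θt + 1) ≤ y := by
    have := Real.rpow_le_rpow_of_exponent_ge hy0 hylt1.le
      (show (1:ℝ) ≤ 2 * θt + 1 by linarith)
    rwa [Real.rpow_one] at this
  have hII1 : am1 * θt * y ^ (2 * θt + 1) + α₁ / θt * y ≤ c / 4 * y ^ (-α) := by
    have h1 : am1 * θt * y ^ (2 * θt + 1) ≤ am1 * θt * y :=
      mul_le_mul_of_nonneg_left hypow (by positivity)
    nlinarith
  have hbridge : c / 4 * y ^ (-α) * 1 ≤ c / 4 * y ^ (-α) * s ^ (2 * H - 1) :=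
    mul_le_mul_of_nonneg_left hs1 (by positivity)
  have h0 : 0 ≤ α₀ * y ^ (θt + 1) := by positivity
  linarith [hI, hII1, hbridge, h0]
end

section
/- With $\tilde f$ as in the fractional Ait-Sahalia transformed drift, there exists $K>0$ such that the spatial derivative satisfies $\partial_y\tilde f(s,y) \le K s^{2H-1}$ for all $s\in(0,1]$ and $y\in(0,\infty)$. -/
open Set

set_option maxHeartbeats 1000000 in
/-- Condition (A1) for the transformed fractional Ait-Sahalia drift: the spatial derivative
is bounded above by `K s^(2H-1)` on `(0,1] × (0,∞)`. -/
theorem stmt_5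
    (H θt ρ am1 α₀ α₁ α₂ σt : ℝ)
    (hH : H ∈ Ioo (0 : ℝ) (1 / 2)) (hθ : 0 < θt) (hρ : ρ > 1 + 1 / (H * θt))
    (ham1 : 0 < am1) (hα₀ : 0 < α₀) (hα₁ : 0 < α₁) (hα₂ : 0 < α₂) (hσ : 0 < σt) :
    ∃ K > (0 : ℝ), ∀ s ∈ Ioc (0 : ℝ) 1, ∀ y : ℝ, 0 < y →
      deriv (fun z : ℝ =>
        -(am1 * θt) * z ^ (2 * θt + 1) + α₀ * z ^ (θt + 1) - (α₁ / θt) * z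
          + (α₂ / θt ^ ρ) * s ^ (2 * H - 1) * z ^ (-(θt * ρ) + θt + 1)
          - σt * H * s ^ (2 * H - 1) * (θt + 1) * z⁻¹) y ≤ K * s ^ (2 * H - 1) := by
  obtain ⟨hH0, hH2⟩ := hH
  -- basic exponent facts
  have h1H : 2 < 1 / H := by rw [lt_div_iff₀ hH0]; linarith
  have hθρ : θt + 1 / H < θt * ρ := by
    have h := mul_lt_mul_of_pos_left hρ hθ
    have heq : θt * (1 + 1 / (H * θt)) = θt + 1 / H := by
      field_simp
    rw [heq] at h; exact h
  have hb2 : -(θt * ρ) + θt + 2 < 0 := by linarith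
  have he : -(θt * ρ) + θt + 1 < 0 := by linarith
  -- constants
  have ha1 : (0:ℝ) < am1 * θt * (2 * θt + 1) := by positivity
  set M1 : ℝ := (α₀ * (θt + 1)) ^ 2 / (4 * (am1 * θt * (2 * θt + 1))) with hM1def
  have hM1 : 0 < M1 := by positivity
  set A2 : ℝ := (α₂ / θt ^ ρ) * (θt * ρ - θt - 1) with hA2def
  have hθρpos : (0:ℝ) < θt ^ ρ := Real.rpow_pos_of_pos hθ ρ
  have hA2 : 0 < A2 := by
    apply mul_pos (by positivity); linarith
  set B2 : ℝ := σt * H * (θt + 1) with hB2def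
  have hB2 : 0 < B2 := by positivity
  set c : ℝ := min 1 ((B2 / A2) ^ (1 / (-(θt * ρ) + θt + 2))) with hcdef
  have hc : 0 < c := lt_min one_pos (Real.rpow_pos_of_pos (by positivity) _)
  set M2 : ℝ := B2 / c ^ 2 with hM2def
  have hM2 : 0 < M2 := by positivity
  refine ⟨M1 + M2, by positivity, ?_⟩
  rintro s ⟨hs0, hs1⟩ y hy
  have hP : 0 < s ^ (2 * H - 1) := Real.rpow_pos_of_pos hs0 _
  have hP1 : 1 ≤ s ^ (2 * H - 1) :=
    Real.one_le_rpow_of_pos_of_le_one_of_nonpos hs0 hs1 (by linarith)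
  -- compute the derivative
  have hd : HasDerivAt (fun z : ℝ =>
        -(am1 * θt) * z ^ (2 * θt + 1) + α₀ * z ^ (θt + 1) - (α₁ / θt) * z
          + (α₂ / θt ^ ρ) * s ^ (2 * H - 1) * z ^ (-(θt * ρ) + θt + 1)
          - σt * H * s ^ (2 * H - 1) * (θt + 1) * z⁻¹)
      (-(am1 * θt) * ((2 * θt + 1) * y ^ (2 * θt + 1 - 1))
        + α₀ * ((θt + 1) * y ^ (θt + 1 - 1)) - (α₁ / θt) * 1
        + (α₂ / θt ^ ρ) * s ^ (2 * H - 1)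
            * ((-(θt * ρ) + θt + 1) * y ^ (-(θt * ρ) + θt + 1 - 1))
        - σt * H * s ^ (2 * H - 1) * (θt + 1) * (-(y ^ 2)⁻¹)) y := by
    have h1 := (Real.hasDerivAt_rpow_const (x := y) (p := 2 * θt + 1)
      (Or.inl hy.ne')).const_mul (-(am1 * θt))
    have h2 := (Real.hasDerivAt_rpow_const (x := y) (p := θt + 1)
      (Or.inl hy.ne')).const_mul α₀
    have h3 := (hasDerivAt_id y).const_mul (α₁ / θt)
    have h4 := (Real.hasDerivAt_rpow_const (x := y) (p := -(θt * ρ) + θt + 1)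
      (Or.inl hy.ne')).const_mul ((α₂ / θt ^ ρ) * s ^ (2 * H - 1))
    have h5 := (hasDerivAt_inv hy.ne').const_mul (σt * H * s ^ (2 * H - 1) * (θt + 1))
    exact (((h1.add h2).sub h3).add h4).sub h5
  rw [hd.deriv]
  -- rewrite exponents
  have e1 : 2 * θt + 1 - 1 = θt * 2 := by ring
  have e2 : θt + 1 - 1 = θt := by ring
  rw [e1, e2]
  set t : ℝ := y ^ θt with htdef
  have ht : 0 < t := Real.rpow_pos_of_pos hy θt
  have hy2 : y ^ (θt * 2) = t ^ 2 := by
    rw [Real.rpow_mul hy.le, Real.rpow_two]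
  rw [hy2]
  -- polynomial part bound
  have hpoly : -(am1 * θt) * ((2 * θt + 1) * t ^ 2) + α₀ * ((θt + 1) * t)
      - (α₁ / θt) * 1 ≤ M1 := by
    have hM1eq : M1 * (4 * (am1 * θt * (2 * θt + 1))) = (α₀ * (θt + 1)) ^ 2 := by
      rw [hM1def]; field_simp
    have hα1θ : 0 < α₁ / θt := by positivity
    nlinarith [sq_nonneg (2 * (am1 * θt * (2 * θt + 1)) * t - α₀ * (θt + 1)), hM1eq, ha1, hα1θ]
  -- singular part bound
  have hyb : (0:ℝ) < y ^ (-(θt * ρ) + θt + 1 - 1) := Real.rpow_pos_of_pos hy _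
  have hsing : (α₂ / θt ^ ρ) * ((-(θt * ρ) + θt + 1) * y ^ (-(θt * ρ) + θt + 1 - 1))
      + σt * H * (θt + 1) * (y ^ 2)⁻¹ ≤ M2 := by
    have hrw : (α₂ / θt ^ ρ) * ((-(θt * ρ) + θt + 1) * y ^ (-(θt * ρ) + θt + 1 - 1))
        = -A2 * y ^ (-(θt * ρ) + θt + 1 - 1) := by rw [hA2def]; ring
    rw [hrw, ← hB2def]
    rcases le_total y c with hyc | hcy
    · -- small y : total ≤ 0 ≤ M2
      have hexp : y ^ (-(θt * ρ) + θt + 1 - 1) = y ^ (-(θt * ρ) + θt + 2) * (y ^ 2)⁻¹ := by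
        rw [← Real.rpow_two, ← Real.rpow_neg hy.le, ← Real.rpow_add hy]
        ring_nf
      have hyexp : B2 / A2 ≤ y ^ (-(θt * ρ) + θt + 2) := by
        have h1 : y ^ (-(θt * ρ) + θt + 2)
            ≥ ((B2 / A2) ^ (1 / (-(θt * ρ) + θt + 2))) ^ (-(θt * ρ) + θt + 2) := by
          apply Real.rpow_le_rpow_of_nonpos hy
            (le_trans hyc (min_le_right _ _)) hb2.le
        have h2 : ((B2 / A2) ^ (1 / (-(θt * ρ) + θt + 2))) ^ (-(θt * ρ) + θt + 2)
            = B2 / A2 := by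
          rw [← Real.rpow_mul (by positivity : (0:ℝ) ≤ B2/A2),
            one_div, inv_mul_cancel₀ hb2.ne, Real.rpow_one]
        linarith [h2 ▸ h1]
      have hy2inv : (0:ℝ) < (y ^ 2)⁻¹ := by positivity
      have key : B2 * (y ^ 2)⁻¹ ≤ A2 * y ^ (-(θt * ρ) + θt + 1 - 1) := by
        rw [hexp, ← mul_assoc]
        apply mul_le_mul_of_nonneg_right _ hy2inv.le
        calc B2 = A2 * (B2 / A2) := by field_simp
        _ ≤ A2 * y ^ (-(θt * ρ) + θt + 2) := by
            exact mul_le_mul_of_nonneg_left hyexp hA2.le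
      linarith
    · -- large y : first term ≤ 0, second ≤ M2
      have h1 : -A2 * y ^ (-(θt * ρ) + θt + 1 - 1) ≤ 0 := by
        have := mul_pos hA2 hyb; linarith
      have h2 : B2 * (y ^ 2)⁻¹ ≤ M2 := by
        rw [hM2def, div_eq_mul_inv]
        apply mul_le_mul_of_nonneg_left _ hB2.le
        exact inv_anti₀ (by positivity) (pow_le_pow_left₀ hc.le hcy 2)
      linarith
  -- combine
  have hfinal :
      -(am1 * θt) * ((2 * θt + 1) * t ^ 2) + α₀ * ((θt + 1) * t) - (α₁ / θt) * 1
        + (α₂ / θt ^ ρ) * s ^ (2 * H - 1)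
            * ((-(θt * ρ) + θt + 1) * y ^ (-(θt * ρ) + θt + 1 - 1))
        - σt * H * s ^ (2 * H - 1) * (θt + 1) * (-(y ^ 2)⁻¹)
      ≤ M1 + M2 * s ^ (2 * H - 1) := by
    have h := mul_le_mul_of_nonneg_left hsing hP.le
    have hrw : s ^ (2 * H - 1) * ((α₂ / θt ^ ρ) * ((-(θt * ρ) + θt + 1)
          * y ^ (-(θt * ρ) + θt + 1 - 1)) + σt * H * (θt + 1) * (y ^ 2)⁻¹)
        = (α₂ / θt ^ ρ) * s ^ (2 * H - 1)
            * ((-(θt * ρ) + θt + 1) * y ^ (-(θt * ρ) + θt + 1 - 1))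
          - σt * H * s ^ (2 * H - 1) * (θt + 1) * (-(y ^ 2)⁻¹) := by ring
    rw [hrw] at h
    linarith [h]
  calc _ ≤ M1 + M2 * s ^ (2 * H - 1) := hfinal
  _ ≤ (M1 + M2) * s ^ (2 * H - 1) := by
      nlinarith [le_mul_of_one_le_right hM1.le hP1]
end

section
/- Let $(x^n)_{n\ge1}$ be real random variables with $x^n\to x$ a.s., $x\ge 0$ a.s., and $\sup_n \mathbb{E}[(x^n-\mathbb{E}[x^n])^2]\le C<\infty$. Then $\sup_n|\mathbb{E}[x^n]|<\infty$. -/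
/-!
Convergence a.s. makes `xⁿ(ω)` bounded for a.e. `ω`, so if the means `E[xⁿ]` were unbounded,
then along a filter on which they blow up, `(xⁿ - E[xⁿ])²` would tend to `∞` almost surely.
Fatou's lemma then contradicts the uniform bound on the variances.
-/

open MeasureTheory Filter Set Topology

lemma tendsto_abs_sub_atTop_of_bddAbove {ι : Type*} {l : Filter ι} {g c : ι → ℝ}
    (hg : BddAbove (range fun i => |g i|)) (hc : Tendsto (fun i => |c i|) l atTop) :
    Tendsto (fun i => |g i - c i|) l atTop := by
  obtain ⟨B, hB⟩ := hg
  refine tendsto_atTop_mono (fun i => ?_) (tendsto_atTop_add_const_right l (-B) hc)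
  have hgi : |g i| ≤ B := hB ⟨i, rfl⟩
  have htriangle := abs_sub_abs_le_abs_sub (c i) (g i)
  rw [abs_sub_comm] at htriangle
  linarith

lemma not_ae_tendsto_atTop_of_integral_le {Ω ι : Type*} [MeasurableSpace Ω] {μ : Measure Ω}
    [NeZero μ] {l : Filter ι} [l.NeBot] [l.IsCountablyGenerated] {f : ι → Ω → ℝ} {C : ℝ}
    (hf : ∀ i, Integrable (f i) μ) (hf_nonneg : ∀ i, 0 ≤ᵐ[μ] f i)
    (hC : ∀ i, ∫ ω, f i ω ∂μ ≤ C) :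
    ¬ ∀ᵐ ω ∂μ, Tendsto (fun i => f i ω) l atTop := by
  intro htendsto
  have hliminf : ∀ᵐ ω ∂μ, liminf (fun i => ENNReal.ofReal (f i ω)) l = ⊤ := by
    filter_upwards [htendsto] with ω hω
    exact (ENNReal.tendsto_ofReal_atTop.comp hω).liminf_eq
  have hlintegral : ∀ i, ∫⁻ ω, ENNReal.ofReal (f i ω) ∂μ ≤ ENNReal.ofReal C := fun i => by
    rw [← ofReal_integral_eq_lintegral_ofReal (hf i) (hf_nonneg i)]
    exact ENNReal.ofReal_le_ofReal (hC i)
  have hfatou := lintegral_liminf_le' (u := l) fun i => (hf i).aemeasurable.ennreal_ofReal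
  rw [lintegral_congr_ae hliminf, lintegral_const, ENNReal.top_mul (NeZero.ne (μ univ))] at hfatou
  have : liminf (fun i => ∫⁻ ω, ENNReal.ofReal (f i ω) ∂μ) l ≤ ENNReal.ofReal C :=
    liminf_le_of_frequently_le' (Frequently.of_forall hlintegral)
  exact ENNReal.ofReal_ne_top (top_le_iff.1 (hfatou.trans this))

lemma bddAbove_abs_of_integral_sq_sub_le {Ω : Type*} [MeasurableSpace Ω] {μ : Measure Ω}
    [IsFiniteMeasure μ] [NeZero μ] {xn : ℕ → Ω → ℝ} {c : ℕ → ℝ} {C : ℝ}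
    (hxn : ∀ n, MemLp (xn n) 2 μ)
    (hconv : ∀ᵐ ω ∂μ, ∃ y, Tendsto (fun n => xn n ω) atTop (𝓝 y))
    (hC : ∀ n, ∫ ω, (xn n ω - c n) ^ 2 ∂μ ≤ C) :
    BddAbove (range fun n => |c n|) := by
  by_contra hunbdd
  set l : Filter ℕ := comap (fun n => |c n|) atTop
  have : l.NeBot := comap_neBot fun t ht => by
    obtain ⟨a, ha⟩ := mem_atTop_sets.1 ht
    obtain ⟨_, ⟨n, rfl⟩, hn⟩ := not_bddAbove_iff.1 hunbdd a
    exact ⟨n, ha _ hn.le⟩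
  refine not_ae_tendsto_atTop_of_integral_le (l := l)
    (fun n => ((hxn n).sub (memLp_const (c n))).integrable_sq)
    (fun n => ae_of_all _ fun ω => sq_nonneg _) hC ?_
  filter_upwards [hconv] with ω ⟨y, hy⟩
  have habs := tendsto_abs_sub_atTop_of_bddAbove (c := c) (l := l) hy.abs.bddAbove_range
    tendsto_comap
  simpa only [Pi.sub_apply, Function.comp_def, sq_abs] using
    (tendsto_pow_atTop two_ne_zero).comp habs

theorem stmt_18_general
    {Ω : Type*} [MeasurableSpace Ω] (P : Measure Ω) [IsProbabilityMeasure P]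
    (x : Ω → ℝ) (xn : ℕ → Ω → ℝ) (C : ℝ)
    (hint : ∀ n, MemLp (xn n) 2 P)
    (hconv : ∀ᵐ ω ∂P, Filter.Tendsto (fun n => xn n ω) Filter.atTop (nhds (x ω)))
    (hvar : ∀ n, (∫ ω, (xn n ω - ∫ ω', xn n ω' ∂P) ^ 2 ∂P) ≤ C) :
    ∃ M : ℝ, ∀ n, |∫ ω, xn n ω ∂P| ≤ M := by
  obtain ⟨M, hM⟩ := bddAbove_abs_of_integral_sq_sub_le hint
    (hconv.mono fun ω hω => ⟨x ω, hω⟩) hvar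
  exact ⟨M, fun n => hM ⟨n, rfl⟩⟩

/-- If `xⁿ → x` a.s. with `x ≥ 0` a.s. and uniformly bounded variances, then the
means `E[xⁿ]` are bounded. -/
theorem stmt_18
    {Ω : Type*} [MeasurableSpace Ω] (P : Measure Ω) [IsProbabilityMeasure P]
    (x : Ω → ℝ) (xn : ℕ → Ω → ℝ) (C : ℝ)
    (hint : ∀ n, MemLp (xn n) 2 P)
    (hconv : ∀ᵐ ω ∂P, Filter.Tendsto (fun n => xn n ω) Filter.atTop (nhds (x ω)))
    (hpos : ∀ᵐ ω ∂P, 0 ≤ x ω)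
    (hvar : ∀ n, (∫ ω, (xn n ω - ∫ ω', xn n ω' ∂P) ^ 2 ∂P) ≤ C) :
    ∃ M : ℝ, ∀ n, |∫ ω, xn n ω ∂P| ≤ M :=
  stmt_18_general P x xn C hint hconv hvar
end
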